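/- arXiv:1803.01340 — 2 statements merged into one kernel-verified Lean document; each statement's English description precedes it below -/
import Mathlib

section
/- Let G be a locally compact Hausdorff topological group with left Haar measure μ, U₀ a compact neighborhood of the identity, f : G → ℂ continuous, K ⊆ G compact, and ε > 0. Then there exists a neighborhood V of the identity in G such that for every compact neighborhood U ⊆ U₀ of the identity, every U-mollifier η, and all t₁, t₂ ∈ K with t₁⁻¹·t₂ ∈ V, one has |(η * f)(t₁) − (η * f)(t₂)| < ε; i.e., the family {η * f} is equicontinuous on K. -/
/-! The translates `s⁻¹ * t` with `s ∈ supp η ⊆ U₀` and `t ∈ K` stay in the compact set `U₀⁻¹ * K`,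
on which `f` is uniformly continuous from the right: a single `V` makes
`‖f (x * v) - f x‖ < ε / 2` for all such `x` and all `v ∈ V`. Since `η ≥ 0` has integral one,
the convolutions at `t₁` and `t₂ = t₁ * v` then differ by at most `ε / 2`. -/

open scoped Topology Pointwise
open MeasureTheory

theorem IsCompact.eventually_forall_dist_mul_lt {G E : Type*} [TopologicalSpace G] [MulOneClass G]
    [ContinuousMul G] [PseudoMetricSpace E] {f : G → E} (hf : Continuous f) {L : Set G}
    (hL : IsCompact L) {ε : ℝ} (hε : 0 < ε) :
    ∀ᶠ v in 𝓝 (1 : G), ∀ x ∈ L, dist (f (x * v)) (f x) < ε := by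
  refine hL.eventually_forall_of_forall_eventually fun x _ ↦ ?_
  have hcont : Continuous fun z : G × G ↦ dist (f (z.2 * z.1)) (f z.2) := by fun_prop
  exact hcont.continuousAt.eventually_lt continuousAt_const (by simpa using hε)

theorem norm_integral_ofReal_mul_sub_le {X 𝕜 : Type*} [MeasurableSpace X] [RCLike 𝕜]
    {μ : Measure X} {η : X → ℝ} (hη : ∀ x, 0 ≤ η x) (hηi : Integrable η μ) {g₁ g₂ : X → 𝕜}
    (hg₁ : Integrable (fun x ↦ (η x : 𝕜) * g₁ x) μ) (hg₂ : Integrable (fun x ↦ (η x : 𝕜) * g₂ x) μ)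
    {δ : ℝ} (hδ : ∀ x, η x ≠ 0 → ‖g₁ x - g₂ x‖ ≤ δ) :
    ‖(∫ x, (η x : 𝕜) * g₁ x ∂μ) - ∫ x, (η x : 𝕜) * g₂ x ∂μ‖ ≤ δ * ∫ x, η x ∂μ := by
  rw [← integral_sub hg₁ hg₂, mul_comm, ← integral_mul_const]
  refine norm_integral_le_of_norm_le (hηi.mul_const δ) (.of_forall fun x ↦ ?_)
  rw [← mul_sub, norm_mul, RCLike.norm_ofReal, abs_of_nonneg (hη x)]
  rcases eq_or_ne (η x) 0 with h | h
  · simp [h]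
  · exact mul_le_mul_of_nonneg_left (hδ x h) (hη x)

theorem mollifier_convolution_equicontinuous_general
    (G : Type*) [Group G] [TopologicalSpace G] [IsTopologicalGroup G]
    [MeasurableSpace G] [BorelSpace G]
    (μ : Measure G) [μ.IsHaarMeasure]
    (U₀ : Set G) (hU₀c : IsCompact U₀)
    (f : G → ℂ) (hf : Continuous f)
    (K : Set G) (hK : IsCompact K) (ε : ℝ) (hε : 0 < ε) :
    ∃ V ∈ 𝓝 (1 : G),
      ∀ U : Set G, IsCompact U → U ∈ 𝓝 (1 : G) → U ⊆ U₀ →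
      ∀ η : G → ℝ, Continuous η → tsupport η ⊆ U → (∀ x, 0 ≤ η x) →
        (∫ x, η x ∂μ) = 1 →
      ∀ t₁ ∈ K, ∀ t₂ ∈ K, t₁⁻¹ * t₂ ∈ V →
        ‖(∫ s, (η s : ℂ) * f (s⁻¹ * t₁) ∂μ)
          - ∫ s, (η s : ℂ) * f (s⁻¹ * t₂) ∂μ‖ < ε := by
  refine ⟨_, (hU₀c.inv.mul hK).eventually_forall_dist_mul_lt hf (half_pos hε),
    fun U hUc _ hUU₀ η hη hηU hη0 hη1 t₁ ht₁ t₂ ht₂ ht ↦ ?_⟩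
  have hηc : HasCompactSupport η := hUc.of_isClosed_subset (isClosed_tsupport η) hηU
  have hint : ∀ t, Integrable (fun s ↦ (η s : ℂ) * f (s⁻¹ * t)) μ := fun t ↦
    (by fun_prop : Continuous fun s ↦ (η s : ℂ) * f (s⁻¹ * t)).integrable_of_hasCompactSupport
      (hηc.comp_left Complex.ofReal_zero).mul_right
  have hclose : ∀ s, η s ≠ 0 → ‖f (s⁻¹ * t₁) - f (s⁻¹ * t₂)‖ ≤ ε / 2 := fun s hs ↦ by
    have hs₀ : s⁻¹ * t₁ ∈ U₀⁻¹ * K :=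
      Set.mul_mem_mul (Set.inv_mem_inv.2 (hUU₀ (hηU (subset_tsupport η hs)))) ht₁
    have := ht _ hs₀
    rw [← mul_assoc, mul_inv_cancel_right, dist_eq_norm] at this
    rw [norm_sub_rev]
    exact this.le
  calc _ ≤ ε / 2 * ∫ s, η s ∂μ :=
        norm_integral_ofReal_mul_sub_le hη0 (hη.integrable_of_hasCompactSupport hηc)
          (hint t₁) (hint t₂) hclose
    _ < ε := by rw [hη1, mul_one]; exact half_lt_self hε

/-- Equicontinuity on compacta of the mollified family: given a compact
neighborhood `U₀` of the identity, a continuous `f : G → ℂ`, a compact `K ⊆ G`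
and `ε > 0`, there is a neighborhood `V` of the identity such that for every
compact neighborhood `U ⊆ U₀` of the identity, every `U`-mollifier `η` and all
`t₁, t₂ ∈ K` with `t₁⁻¹·t₂ ∈ V`, `|(η * f)(t₁) − (η * f)(t₂)| < ε`. -/
theorem mollifier_convolution_equicontinuous
    (G : Type*) [Group G] [TopologicalSpace G] [IsTopologicalGroup G]
    [LocallyCompactSpace G] [T2Space G]
    [MeasurableSpace G] [BorelSpace G]
    (μ : Measure G) [μ.IsHaarMeasure]
    (U₀ : Set G) (hU₀c : IsCompact U₀) (hU₀1 : U₀ ∈ 𝓝 (1 : G))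
    (f : G → ℂ) (hf : Continuous f)
    (K : Set G) (hK : IsCompact K) (ε : ℝ) (hε : 0 < ε) :
    ∃ V ∈ 𝓝 (1 : G),
      ∀ U : Set G, IsCompact U → U ∈ 𝓝 (1 : G) → U ⊆ U₀ →
      ∀ η : G → ℝ, Continuous η → tsupport η ⊆ U → (∀ x, 0 ≤ η x) →
        (∫ x, η x ∂μ) = 1 →
      ∀ t₁ ∈ K, ∀ t₂ ∈ K, t₁⁻¹ * t₂ ∈ V →
        ‖(∫ s, (η s : ℂ) * f (s⁻¹ * t₁) ∂μ)
          - ∫ s, (η s : ℂ) * f (s⁻¹ * t₂) ∂μ‖ < ε :=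
  mollifier_convolution_equicontinuous_general G μ U₀ hU₀c f hf K hK ε hε
end

section
/- Let G be a locally compact Hausdorff topological group with left Haar measure μ, U₀ a compact neighborhood of the identity, and f : G → ℂ continuous. Then the set {η * f : U ⊆ U₀ a compact neighborhood of the identity, η a U-mollifier} has compact closure in C(G) equipped with the compact-open topology. -/
open scoped Topology
open MeasureTheory Set Function

/-!
By Arzelà–Ascoli it suffices to show that the functions `η * f` are equicontinuous and pointwise
bounded. Since `η ≥ 0` has integral `1` and support in the compact set `U₀`, `η * f` is an average
of the translates `t ↦ f (s⁻¹ * t)`, `s ∈ U₀`; so `(η * f)(t)` is bounded by `sup_{s ∈ U₀} ‖f (s⁻¹ * t)‖`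
and `‖(η * f)(t) - (η * f)(t')‖` by `sup_{s ∈ U₀} ‖f (s⁻¹ * t) - f (s⁻¹ * t')‖`, which is small
for `t'` near `t` by compactness of `U₀`.
-/

/-- Arzelà–Ascoli in `C(X, α)` with the compact-open topology. -/
theorem ContinuousMap.isCompact_closure_of_equicontinuous {X α : Type*} [TopologicalSpace X]
    [CompactlyCoherentSpace X] [UniformSpace α] [T2Space α] {S : Set C(X, α)}
    (hS : Equicontinuous ((↑) : S → X → α))
    (hS_bdd : ∀ x, ∃ Q, IsCompact Q ∧ ∀ g ∈ S, g x ∈ Q) :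
    IsCompact (closure S) := by
  have hclemb : Topology.IsClosedEmbedding
      (UniformOnFun.ofFun {K : Set X | IsCompact K} ∘ (DFunLike.coe : C(X, α) → X → α)) := by
    refine ⟨isUniformEmbedding_toUniformOnFunIsCompact.isEmbedding, ?_⟩
    change IsClosed (range toUniformOnFunIsCompact)
    rw [range_toUniformOnFunIsCompact]
    exact UniformOnFun.isClosed_setOfPred_continuous CompactlyCoherentSpace.isCoherentWith
  exact ArzelaAscoli.isCompact_closure_of_isClosedEmbedding (fun _ hK => hK) hclemb
    (fun K _ => hS.equicontinuousOn K) fun _ _ x _ => hS_bdd x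

structure IsMollifier {X : Type*} [TopologicalSpace X] [MeasurableSpace X]
    (μ : Measure X) (U : Set X) (η : X → ℝ) : Prop where
  continuous : Continuous η
  tsupport_subset : tsupport η ⊆ U
  nonneg : ∀ x, 0 ≤ η x
  integral_eq_one : ∫ x, η x ∂μ = 1

namespace IsMollifier

variable {X : Type*} [TopologicalSpace X] [MeasurableSpace X] {μ : Measure X} {K : Set X}
  {η : X → ℝ}

theorem norm_integral_le (hη : IsMollifier μ K η) {c : X → ℂ} {M : ℝ}
    (hM : ∀ x ∈ K, ‖c x‖ ≤ M) : ‖∫ x, (η x : ℂ) * c x ∂μ‖ ≤ M := by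
  have hη_int : Integrable η μ :=
    Integrable.of_integral_ne_zero (by rw [hη.integral_eq_one]; exact one_ne_zero)
  have hpt : ∀ x, ‖(η x : ℂ) * c x‖ ≤ η x * M := by
    intro x
    by_cases hx : η x = 0
    · simp [hx]
    · rw [norm_mul, Complex.norm_real, Real.norm_of_nonneg (hη.nonneg x)]
      exact mul_le_mul_of_nonneg_left
        (hM x (hη.tsupport_subset (subset_tsupport η hx))) (hη.nonneg x)
  calc ‖∫ x, (η x : ℂ) * c x ∂μ‖ ≤ ∫ x, η x * M ∂μ :=
        norm_integral_le_of_norm_le (hη_int.mul_const M) (.of_forall hpt)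
    _ = M := by rw [integral_mul_const, hη.integral_eq_one, one_mul]

variable [OpensMeasurableSpace X] [IsFiniteMeasureOnCompacts μ]

theorem integrable_ofReal_mul (hη : IsMollifier μ K η) (hK : IsCompact K) {c : X → ℂ}
    (hc : Continuous c) : Integrable (fun x => (η x : ℂ) * c x) μ := by
  have hη_supp : HasCompactSupport η :=
    hK.of_isClosed_subset (isClosed_tsupport η) hη.tsupport_subset
  exact (Complex.continuous_ofReal.comp hη.continuous).mul hc |>.integrable_of_hasCompactSupport
    (hη_supp.comp_left Complex.ofReal_zero).mul_right

theorem dist_integral_le (hη : IsMollifier μ K η) (hK : IsCompact K) {c d : X → ℂ}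
    (hc : Continuous c) (hd : Continuous d) {M : ℝ} (hM : ∀ x ∈ K, dist (c x) (d x) ≤ M) :
    dist (∫ x, (η x : ℂ) * c x ∂μ) (∫ x, (η x : ℂ) * d x ∂μ) ≤ M := by
  rw [dist_eq_norm, ← integral_sub (hη.integrable_ofReal_mul hK hc)
    (hη.integrable_ofReal_mul hK hd)]
  simp_rw [← mul_sub]
  exact hη.norm_integral_le fun x hx => by simpa [dist_eq_norm] using hM x hx

end IsMollifier

theorem equicontinuous_integral_ofReal_mul {X Y ι : Type*} [TopologicalSpace X]
    [MeasurableSpace X] [OpensMeasurableSpace X] {μ : Measure X} [IsFiniteMeasureOnCompacts μ]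
    [TopologicalSpace Y] {K : Set X} (hK : IsCompact K) {η : ι → X → ℝ}
    (hη : ∀ i, IsMollifier μ K (η i)) {F : X → Y → ℂ} (hF : Continuous (uncurry F)) :
    Equicontinuous fun i y => ∫ x, (η i x : ℂ) * F x y ∂μ := by
  have : CompactSpace K := isCompact_iff_compactSpace.mp hK
  -- `y ↦ F(·, y)|_K` is continuous into `C(K, ℂ)` with its sup metric
  let Φ : C(Y, C(K, ℂ)) := ContinuousMap.curry
    ⟨fun p : Y × K => F p.2 p.1, hF.comp (continuous_subtype_val.comp continuous_snd |>.prodMk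
      continuous_fst)⟩
  intro y₀
  rw [Metric.equicontinuousAt_iff_right]
  intro ε hε
  filter_upwards [Metric.tendsto_nhds.mp (Φ.continuous.tendsto y₀) (ε / 2) (half_pos hε)]
    with y hy i
  have hF_cont : ∀ y, Continuous (F · y) := fun y => hF.comp (.prodMk_left y)
  refine ((hη i).dist_integral_le hK (hF_cont y₀) (hF_cont y) fun x hx => ?_).trans_lt
    (half_lt_self hε)
  rw [dist_comm]
  exact (ContinuousMap.dist_apply_le_dist (f := Φ y) (g := Φ y₀) ⟨x, hx⟩).trans hy.le

theorem mollifier_convolution_totally_bounded_general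
    (G : Type*) [Group G] [TopologicalSpace G] [IsTopologicalGroup G]
    [LocallyCompactSpace G]
    [MeasurableSpace G] [BorelSpace G]
    (μ : Measure G) [μ.IsHaarMeasure]
    (U₀ : Set G) (hU₀c : IsCompact U₀)
    (f : G → ℂ) (hf : Continuous f) :
    IsCompact (closure
      {g : C(G, ℂ) | ∃ U : Set G, IsCompact U ∧ U ∈ 𝓝 (1 : G) ∧ U ⊆ U₀ ∧
        ∃ η : G → ℝ, Continuous η ∧ tsupport η ⊆ U ∧ (∀ x, 0 ≤ η x) ∧
          (∫ x, η x ∂μ) = 1 ∧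
          ∀ t, g t = ∫ s, (η s : ℂ) * f (s⁻¹ * t) ∂μ}) := by
  set T := {g : C(G, ℂ) | ∃ η, IsMollifier μ U₀ η ∧ ∀ t, g t = ∫ s, (η s : ℂ) * f (s⁻¹ * t) ∂μ}
  refine .of_isClosed_subset (ContinuousMap.isCompact_closure_of_equicontinuous (S := T) ?_ ?_)
    isClosed_closure (closure_mono ?_)
  · choose η hη hg using fun g : T => g.2
    have hT : (fun g : T => ⇑(g : C(G, ℂ))) = fun g t => ∫ s, (η g s : ℂ) * f (s⁻¹ * t) ∂μ :=
      funext fun g => funext (hg g)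
    rw [hT]
    exact equicontinuous_integral_ofReal_mul hU₀c hη (F := fun s t => f (s⁻¹ * t))
      (hf.comp (by fun_prop))
  · intro t
    obtain ⟨M, hM⟩ := hU₀c.exists_bound_of_continuousOn (f := fun s => f (s⁻¹ * t))
      (by fun_prop)
    refine ⟨Metric.closedBall 0 M, isCompact_closedBall 0 M, ?_⟩
    rintro g ⟨η, hη, hg⟩
    rw [mem_closedBall_zero_iff, hg]
    exact hη.norm_integral_le hM
  · rintro g ⟨U, -, -, hUU₀, η, hηc, hηU, hη0, hη1, hg⟩
    exact ⟨η, ⟨hηc, hηU.trans hUU₀, hη0, hη1⟩, hg⟩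

/-- Total boundedness of the mollified family: for a compact neighborhood `U₀`
of the identity and a continuous `f : G → ℂ`, the set
`{η * f : U ⊆ U₀ a compact neighborhood of 1, η a U-mollifier}` has compact
closure in `C(G)` with the compact-open topology. -/
theorem mollifier_convolution_totally_bounded
    (G : Type*) [Group G] [TopologicalSpace G] [IsTopologicalGroup G]
    [LocallyCompactSpace G] [T2Space G]
    [MeasurableSpace G] [BorelSpace G]
    (μ : Measure G) [μ.IsHaarMeasure]
    (U₀ : Set G) (hU₀c : IsCompact U₀) (hU₀1 : U₀ ∈ 𝓝 (1 : G))
    (f : G → ℂ) (hf : Continuous f) :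
    IsCompact (closure
      {g : C(G, ℂ) | ∃ U : Set G, IsCompact U ∧ U ∈ 𝓝 (1 : G) ∧ U ⊆ U₀ ∧
        ∃ η : G → ℝ, Continuous η ∧ tsupport η ⊆ U ∧ (∀ x, 0 ≤ η x) ∧
          (∫ x, η x ∂μ) = 1 ∧
          ∀ t, g t = ∫ s, (η s : ℂ) * f (s⁻¹ * t) ∂μ}) :=
  mollifier_convolution_totally_bounded_general G μ U₀ hU₀c f hf
end
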